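/- arXiv:2306.16179 — 2 statements merged into one kernel-verified Lean document; each statement's English description precedes it below -/
import Mathlib

section
/- Let q be a line path in a subshift X, and suppose c, d are nonempty finite words and x' ∈ X satisfy c x' = d x' with x' tail equivalent to q. Then c and d have the same length, and hence c = d. -/
/-- The iterated shift: `shiftN x n = σⁿ(x)`. -/
def shiftN {A : Type*} (x : ℕ → A) (n : ℕ) : ℕ → A := fun k => x (k + n)

/-- Tail equivalence: `x ∼ y` iff `σⁿ(x) = σᵐ(y)` for some `n, m ∈ ℕ`. -/
def tailEq {A : Type*} (x y : ℕ → A) : Prop := ∃ n m : ℕ, shiftN x n = shiftN y m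

/-- Concatenation of a finite word with an infinite sequence. -/
def wcat {A : Type*} (w : List A) (x : ℕ → A) : ℕ → A :=
  fun n => if h : n < w.length then w.get ⟨n, h⟩ else x (n - w.length)

/-- The language of `X`: finite words appearing in some element of `X`. -/
def inLang {A : Type*} (X : Set (ℕ → A)) (w : List A) : Prop :=
  ∃ x ∈ X, ∃ k : ℕ, ∀ i (h : i < w.length), w.get ⟨i, h⟩ = x (k + i)

/-- The periodic infinite word `w^∞`. -/
def perInf {A : Type*} (w : List A) (h : w ≠ []) : ℕ → A :=
  fun n => w.get ⟨n % w.length, Nat.mod_lt n (List.length_pos_iff.mpr h)⟩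

/-- `q` is a line path in `X`. -/
def IsLinePath {A : Type*} (X : Set (ℕ → A)) (q : ℕ → A) : Prop :=
  q ∈ X ∧ {x | x ∈ X ∧ x 0 = q 0} = {q} ∧
    ∀ (β : List A) (hβ : β ≠ []) (k : ℕ), shiftN q k ≠ perInf β hβ

/-! If `c x' = d x'` with `|c| < |d|`, comparing the two sides beyond position `|d|` shows that
`x'` is periodic with period `|d| - |c|`. Every shift of a periodic sequence is periodic, hence of
the form `β^∞`; since `x'` and `q` share a tail, some shift of `q` would be `β^∞`, which a line path
forbids. So `|c| = |d|`, and then `c` and `d` are the common prefix of length `|c|`. -/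

open Function

theorem Function.Periodic.shiftN {A : Type*} {x : ℕ → A} {p : ℕ} (hx : Periodic x p) (n : ℕ) :
    Periodic (shiftN x n) p := fun k => by
  simp only [_root_.shiftN, add_right_comm k p n, hx (k + n)]

theorem Function.Periodic.eq_perInf {A : Type*} {x : ℕ → A} {p : ℕ} (hx : Periodic x p)
    (hp : 0 < p) :
    x = perInf (List.ofFn fun i : Fin p => x i) (List.ofFn_eq_nil_iff.not.mpr hp.ne') := by
  funext k
  simp [perInf, hx.map_mod_nat]

theorem IsLinePath.not_periodic_of_tailEq {A : Type*} {X : Set (ℕ → A)} {q x : ℕ → A}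
    (hq : IsLinePath X q) (hxq : tailEq x q) {p : ℕ} (hp : 0 < p) : ¬ Periodic x p := by
  intro hx
  obtain ⟨n, m, hnm⟩ := hxq
  exact hq.2.2 _ _ m (hnm ▸ (hx.shiftN n).eq_perInf hp)

theorem periodic_of_wcat_eq {A : Type*} {c d : List A} {x : ℕ → A}
    (hle : c.length ≤ d.length) (h : wcat c x = wcat d x) :
    Periodic x (d.length - c.length) := fun k => by
  have hk := congrFun h (k + d.length)
  simp only [wcat, dif_neg (by omega : ¬ k + d.length < c.length),
    dif_neg (by omega : ¬ k + d.length < d.length), Nat.add_sub_cancel] at hk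
  rwa [Nat.add_sub_assoc hle] at hk

theorem length_eq_of_wcat_eq {A : Type*} {c d : List A} {x : ℕ → A}
    (hx : ∀ p, 0 < p → ¬ Periodic x p) (h : wcat c x = wcat d x) : c.length = d.length := by
  rcases lt_trichotomy c.length d.length with hlt | heq | hgt
  · exact absurd (periodic_of_wcat_eq hlt.le h) (hx _ (Nat.sub_pos_of_lt hlt))
  · exact heq
  · exact absurd (periodic_of_wcat_eq hgt.le h.symm) (hx _ (Nat.sub_pos_of_lt hgt))

theorem eq_of_wcat_eq_of_length_eq {A : Type*} {c d : List A} {x : ℕ → A}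
    (hlen : c.length = d.length) (h : wcat c x = wcat d x) : c = d := by
  refine List.ext_get hlen fun i hic hid => ?_
  simpa only [wcat, dif_pos hic, dif_pos hid] using congrFun h i

theorem linePath_word_cancel_general {A : Type*} (X : Set (ℕ → A))
    (q : ℕ → A) (hq : IsLinePath X q)
    (c d : List A)
    (x' : ℕ → A) (hx'q : tailEq x' q)
    (h : wcat c x' = wcat d x') :
    c.length = d.length ∧ c = d := by
  have hlen := length_eq_of_wcat_eq (fun _ hp => hq.not_periodic_of_tailEq hx'q hp) h
  exact ⟨hlen, eq_of_wcat_eq_of_length_eq hlen h⟩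

/-- if `c x' = d x'` for nonempty words `c, d` and `x' ∼ q` with `q`
a line path, then `|c| = |d|` and `c = d`. -/
theorem linePath_word_cancel {A : Type*} (X : Set (ℕ → A))
    (hX : ∀ x ∈ X, shiftN x 1 ∈ X)
    (q : ℕ → A) (hq : IsLinePath X q)
    (c d : List A) (hc : c ≠ []) (hd : d ≠ [])
    (x' : ℕ → A) (hx' : x' ∈ X) (hx'q : tailEq x' q)
    (h : wcat c x' = wcat d x') :
    c.length = d.length ∧ c = d :=
  linePath_word_cancel_general X q hq c d x' hx'q h
end

section
/- Let X be a subshift, R a commutative unital ring, and ℙ the free R-module on {δ_x : x ∈ X}. For finite words α, β in the language of X, define S_β, S_α* by composing the letterwise operators, and let P_{C(α,β)}(δ_x) = [x ∈ C(α,β)]·δ_x where C(α,β) = {βx ∈ X : αx ∈ X}. Then S_β S_α* S_α S_β* = P_{C(α,β)} as endomorphisms of ℙ. -/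
variable {A : Type*} (R : Type*) [CommRing R] (X : Set (ℕ → A))

open Classical

/-- Projection `P_B(δ_x) = [x ∈ B] δ_x` on the free module on `X`. -/
noncomputable def Pop (B : Set (ℕ → A)) : (↥X →₀ R) →ₗ[R] (↥X →₀ R) :=
  Finsupp.lsum R fun x => if (x : ℕ → A) ∈ B then Finsupp.lsingle x else 0

/-- `S_a(δ_x) = [ax ∈ X] δ_{ax}`. -/
noncomputable def Sop (a : A) : (↥X →₀ R) →ₗ[R] (↥X →₀ R) :=
  Finsupp.lsum R fun x =>
    if h : wcat [a] (x : ℕ → A) ∈ X then Finsupp.lsingle (⟨wcat [a] (x : ℕ → A), h⟩ : ↥X) else 0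

/-- `S_a^*(δ_x) = [x₀ = a] δ_{σ(x)}`, needing shift invariance of `X`. -/
noncomputable def SstarOp (hX : ∀ x ∈ X, shiftN x 1 ∈ X) (a : A) :
    (↥X →₀ R) →ₗ[R] (↥X →₀ R) :=
  Finsupp.lsum R fun x =>
    if (x : ℕ → A) 0 = a then
      Finsupp.lsingle (⟨shiftN (x : ℕ → A) 1, hX x x.2⟩ : ↥X) else 0

/-- `S_α = S_{α₁} ∘ ⋯ ∘ S_{αₙ}`. -/
noncomputable def SwordOp (β : List A) : (↥X →₀ R) →ₗ[R] (↥X →₀ R) :=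
  (β.map (Sop R X)).foldr (· ∘ₗ ·) LinearMap.id

/-- `S_α^* = S_{αₙ}^* ∘ ⋯ ∘ S_{α₁}^*`. -/
noncomputable def SstarWordOp (hX : ∀ x ∈ X, shiftN x 1 ∈ X) (α : List A) :
    (↥X →₀ R) →ₗ[R] (↥X →₀ R) :=
  (α.map (SstarOp R X hX)).foldl (fun acc f => f ∘ₗ acc) LinearMap.id

/-- `C(α,β) = {βx ∈ X : αx ∈ X}`. -/
def Cset (α β : List A) : Set (ℕ → A) :=
  {y | ∃ x : ℕ → A, y = wcat β x ∧ wcat β x ∈ X ∧ wcat α x ∈ X}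

/-- The cylinder `Z_μ`. -/
def Zcyl (μ : List A) : Set (ℕ → A) := {y | y ∈ X ∧ ∃ x : ℕ → A, y = wcat μ x}

/-- `ℙ_{[x]}`: the submodule spanned by `{δ_y : y ∼ x}`. -/
noncomputable def Pclass (x : ℕ → A) : Submodule R (↥X →₀ R) :=
  Submodule.span R {f | ∃ y : ↥X, tailEq (y : ℕ → A) x ∧ f = Finsupp.single y (1 : R)}


/-!
Each of the four operators sends a basis vector to a basis vector or to `0`. `S_β^*` sends `δ_x`
to `δ_{σ^{|β|} x}` if `x` begins with `β` and kills it otherwise; `S_α^* S_α` is the diagonal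
projection `δ_y ↦ [αy ∈ X] δ_y`, because `S_α^*` strips off again the prefix `α` that `S_α`
attached; finally `S_β` restores the prefix `β`. So `δ_x` survives, unchanged, exactly when
`x = βy` with `αy ∈ X`, that is, when `x ∈ C(α, β)`.
-/

theorem shiftN_shiftN (x : ℕ → A) (n m : ℕ) : shiftN (shiftN x n) m = shiftN x (m + n) := by
  funext k
  simp only [shiftN, Nat.add_assoc]

variable {X} in
theorem shiftN_mem (hX : ∀ x ∈ X, shiftN x 1 ∈ X) {x : ℕ → A} (hx : x ∈ X) (n : ℕ) :
    shiftN x n ∈ X := by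
  induction n with
  | zero => exact hx
  | succ n ih => simpa only [shiftN_shiftN, Nat.one_add] using hX _ ih

theorem wcat_nil (x : ℕ → A) : wcat [] x = x := by
  funext n
  simp [wcat]

theorem wcat_cons (a : A) (w : List A) (x : ℕ → A) :
    wcat (a :: w) x = wcat [a] (wcat w x) := by
  funext n
  rcases n with _ | n
  · simp [wcat]
  · simp only [wcat, List.length_cons, List.length_nil]
    split_ifs <;> first | omega | simp

theorem shiftN_wcat (w : List A) (x : ℕ → A) : shiftN (wcat w x) w.length = x := by
  funext k
  simp only [shiftN, wcat, dif_neg (Nat.not_lt.2 (Nat.le_add_left w.length k)), Nat.add_sub_cancel]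

theorem shiftN_one_wcat_cons (a : A) (w : List A) (x : ℕ → A) :
    shiftN (wcat (a :: w) x) 1 = wcat w x := by
  rw [wcat_cons]
  exact shiftN_wcat [a] _

def StartsWith (x : ℕ → A) (w : List A) : Prop :=
  ∀ i (h : i < w.length), x i = w.get ⟨i, h⟩

theorem startsWith_nil (x : ℕ → A) : StartsWith x [] :=
  fun _ h => absurd h (Nat.not_lt_zero _)

theorem startsWith_cons (x : ℕ → A) (a : A) (w : List A) :
    StartsWith x (a :: w) ↔ x 0 = a ∧ StartsWith (shiftN x 1) w := by
  constructor
  · intro h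
    refine ⟨h 0 (by simp), fun i hi => ?_⟩
    simpa [shiftN] using h (i + 1) (by simpa using hi)
  · rintro ⟨h0, h1⟩ (_ | i) hi
    · simpa using h0
    · simpa [shiftN] using h1 i (by simpa using hi)

theorem startsWith_wcat (w : List A) (x : ℕ → A) : StartsWith (wcat w x) w :=
  fun i h => by simp [wcat, h]

theorem wcat_shiftN_of_startsWith {x : ℕ → A} {w : List A} (h : StartsWith x w) :
    wcat w (shiftN x w.length) = x := by
  funext n
  simp only [wcat, shiftN]
  split
  · exact (h n ‹_›).symm
  · congr 1
    omega

theorem mem_Cset_iff (α β : List A) {x : ℕ → A} (hx : x ∈ X) :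
    x ∈ Cset X α β ↔ StartsWith x β ∧ wcat α (shiftN x β.length) ∈ X := by
  constructor
  · rintro ⟨z, rfl, -, hαz⟩
    exact ⟨startsWith_wcat β z, by rwa [shiftN_wcat]⟩
  · rintro ⟨hxβ, hα⟩
    refine ⟨shiftN x β.length, (wcat_shiftN_of_startsWith hxβ).symm, ?_, hα⟩
    rwa [wcat_shiftN_of_startsWith hxβ]

theorem LinearMap.foldl_comp_eq_comp {S M : Type*} [Semiring S] [AddCommMonoid M] [Module S M]
    (l : List (M →ₗ[S] M)) (g : M →ₗ[S] M) :
    l.foldl (fun acc f => f ∘ₗ acc) g = l.foldl (fun acc f => f ∘ₗ acc) LinearMap.id ∘ₗ g := by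
  induction l generalizing g with
  | nil => rfl
  | cons f l ih => rw [List.foldl_cons, List.foldl_cons, ih, ih (f ∘ₗ _), LinearMap.comp_assoc]; rfl

theorem Pop_single (B : Set (ℕ → A)) (x : ↥X) :
    Pop R X B (Finsupp.single x 1) = if (x : ℕ → A) ∈ B then Finsupp.single x 1 else 0 := by
  rw [Pop, Finsupp.lsum_single]
  split <;> simp

theorem Sop_single (a : A) (x : ↥X) :
    Sop R X a (Finsupp.single x 1) =
      if h : wcat [a] (x : ℕ → A) ∈ X then Finsupp.single ⟨wcat [a] x, h⟩ 1 else 0 := by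
  rw [Sop, Finsupp.lsum_single]
  split <;> simp

theorem SstarOp_single (hX : ∀ x ∈ X, shiftN x 1 ∈ X) (a : A) (x : ↥X) :
    SstarOp R X hX a (Finsupp.single x 1) =
      if (x : ℕ → A) 0 = a then Finsupp.single ⟨shiftN x 1, hX x x.2⟩ 1 else 0 := by
  rw [SstarOp, Finsupp.lsum_single]
  split <;> simp

theorem SwordOp_cons (a : A) (w : List A) :
    SwordOp R X (a :: w) = Sop R X a ∘ₗ SwordOp R X w := rfl

theorem SstarWordOp_cons (hX : ∀ x ∈ X, shiftN x 1 ∈ X) (a : A) (w : List A) :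
    SstarWordOp R X hX (a :: w) = SstarWordOp R X hX w ∘ₗ SstarOp R X hX a := by
  rw [SstarWordOp, List.map_cons, List.foldl_cons, LinearMap.foldl_comp_eq_comp]
  rfl

theorem SwordOp_single (hX : ∀ x ∈ X, shiftN x 1 ∈ X) (w : List A) (x : ↥X) :
    SwordOp R X w (Finsupp.single x 1) =
      if h : wcat w (x : ℕ → A) ∈ X then Finsupp.single ⟨wcat w x, h⟩ 1 else 0 := by
  induction w generalizing x with
  | nil => simp [SwordOp, wcat_nil]
  | cons a w ih =>
    rw [SwordOp_cons, LinearMap.comp_apply, ih]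
    by_cases hw : wcat w (x : ℕ → A) ∈ X
    · simp only [dif_pos hw, Sop_single, ← wcat_cons]
    · have hc : wcat (a :: w) (x : ℕ → A) ∉ X := fun hc =>
        hw (shiftN_one_wcat_cons a w x ▸ hX _ hc)
      rw [dif_neg hw, map_zero, dif_neg hc]

theorem SstarWordOp_single (hX : ∀ x ∈ X, shiftN x 1 ∈ X) (w : List A) (x : ↥X) :
    SstarWordOp R X hX w (Finsupp.single x 1) =
      if StartsWith (x : ℕ → A) w then
        Finsupp.single ⟨shiftN x w.length, shiftN_mem hX x.2 w.length⟩ 1 else 0 := by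
  induction w generalizing x with
  | nil =>
    simp only [SstarWordOp, List.map_nil, List.foldl_nil, LinearMap.id_apply, startsWith_nil]
    rfl
  | cons a w ih =>
    rw [SstarWordOp_cons, LinearMap.comp_apply, SstarOp_single, startsWith_cons]
    by_cases h0 : (x : ℕ → A) 0 = a
    · simp only [h0, if_true, true_and, ih, shiftN_shiftN, List.length_cons]
    · simp only [h0, if_false, false_and, map_zero]

theorem SstarWordOp_SwordOp_single (hX : ∀ x ∈ X, shiftN x 1 ∈ X) (w : List A) (y : ↥X) :
    SstarWordOp R X hX w (SwordOp R X w (Finsupp.single y 1)) =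
      if wcat w (y : ℕ → A) ∈ X then Finsupp.single y 1 else 0 := by
  rw [SwordOp_single R X hX]
  split_ifs with hw
  · rw [SstarWordOp_single, if_pos (startsWith_wcat w y)]
    exact congrArg (Finsupp.single · 1) (Subtype.ext (shiftN_wcat w y))
  · exact map_zero _

theorem SwordOp_single_of_wcat_eq (hX : ∀ x ∈ X, shiftN x 1 ∈ X) {w : List A} {x y : ↥X}
    (h : wcat w (y : ℕ → A) = x) : SwordOp R X w (Finsupp.single y 1) = Finsupp.single x 1 := by
  rw [SwordOp_single R X hX, dif_pos (h ▸ x.2)]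
  exact congrArg (Finsupp.single · 1) (Subtype.ext h)

theorem Sword_relation_general {A : Type*} (R : Type*) [CommRing R]
    (X : Set (ℕ → A)) (hX : ∀ x ∈ X, shiftN x 1 ∈ X) (α β : List A) :
    SwordOp R X β ∘ₗ SstarWordOp R X hX α ∘ₗ SwordOp R X α ∘ₗ SstarWordOp R X hX β
      = Pop R X (Cset X α β) := by
  refine Finsupp.lhom_ext' fun x => LinearMap.ext_ring ?_
  simp only [LinearMap.comp_apply, Finsupp.lsingle_apply, SstarWordOp_single, Pop_single,
    mem_Cset_iff X α β x.2]
  by_cases hxβ : StartsWith (x : ℕ → A) β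
  · simp only [hxβ, true_and, if_true, SstarWordOp_SwordOp_single R X hX]
    split_ifs
    · exact SwordOp_single_of_wcat_eq R X hX (wcat_shiftN_of_startsWith hxβ)
    · exact (SwordOp R X β).map_zero
  · simp only [hxβ, false_and, if_false, map_zero]

/-- `S_β S_α^* S_α S_β^* = P_{C(α,β)}`. -/
theorem Sword_relation {A : Type*} (R : Type*) [CommRing R]
    (X : Set (ℕ → A)) (hX : ∀ x ∈ X, shiftN x 1 ∈ X) (α β : List A)
    (hα : inLang X α) (hβ : inLang X β) :
    SwordOp R X β ∘ₗ SstarWordOp R X hX α ∘ₗ SwordOp R X α ∘ₗ SstarWordOp R X hX β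
      = Pop R X (Cset X α β) :=
  Sword_relation_general R X hX α β
end
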